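/- arXiv:2604.16012 — 3 statements merged into one kernel-verified Lean document; each statement's English description precedes it below -/
import Mathlib

section
/- For every nonempty graph G and all integers s, t ≥ 1, r̂((s+t)K₂, G) ≤ r̂(sK₂, G) + r̂(tK₂, G). -/
open SimpleGraph Filter Topology

/-- `F` contains an (injective) copy of `G`. -/
def Contains {V W : Type*} (F : SimpleGraph V) (G : SimpleGraph W) : Prop :=
  ∃ f : G →g F, Function.Injective f

/-- `F → (G, H)`: every red-blue coloring of the edges of `F` (given by the red
subgraph `R ≤ F`, the blue edges being those of `F \ R`) contains a red copy of `G`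
or a blue copy of `H`. -/
def Arrows {VF VG VH : Type*} (F : SimpleGraph VF) (G : SimpleGraph VG)
    (H : SimpleGraph VH) : Prop :=
  ∀ R : SimpleGraph VF, R ≤ F → Contains R G ∨ Contains (F \ R) H

/-- The size Ramsey number `r̂(G, H)`: minimum number of edges of a (finite) graph `F`
with `F → (G, H)`. -/
noncomputable def sizeRamsey {VG VH : Type*} (G : SimpleGraph VG) (H : SimpleGraph VH) : ℕ :=
  sInf {m : ℕ | ∃ (n : ℕ) (F : SimpleGraph (Fin n)), Arrows F G H ∧ F.edgeSet.ncard = m}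

/-- The matching `tK₂` with `t` edges. -/
def MatchingGraph (t : ℕ) : SimpleGraph (Fin t × Fin 2) where
  Adj x y := x.1 = y.1 ∧ x.2 ≠ y.2
  symm := ⟨fun _ _ h => ⟨h.1.symm, h.2.symm⟩⟩
  loopless := ⟨fun _ h => h.2 rfl⟩

/-- `r̂_∞(G) = inf_{t ≥ 1} r̂(tK₂, G) / (t |E(G)|)`. -/
noncomputable def rhatInf {V : Type*} (G : SimpleGraph V) : ℝ :=
  ⨅ t : ℕ+, (sizeRamsey (MatchingGraph t) G : ℝ) / (t * G.edgeSet.ncard)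

/-- The matching number `ν(G)`. -/
noncomputable def matchingNumber {V : Type*} (G : SimpleGraph V) : ℕ :=
  sSup {m : ℕ | Contains G (MatchingGraph m)}

/-- The isolate-free core of `G`: delete all isolated vertices. -/
def core {V : Type*} (G : SimpleGraph V) : SimpleGraph {v : V // ∃ w, G.Adj v w} :=
  G.induce {v : V | ∃ w, G.Adj v w}

lemma Contains.mono {A B : Type*} {W : Type*} {FA : SimpleGraph A} {FB : SimpleGraph B}
    {G : SimpleGraph W} (h : Contains FA G) (f : FA →g FB) (hf : Function.Injective f) :
    Contains FB G := by
  obtain ⟨g, hg⟩ := h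
  exact ⟨f.comp g, hf.comp hg⟩

lemma arrows_of_iso {VF VF' VG VH : Type*} {F : SimpleGraph VF} {F' : SimpleGraph VF'}
    {G : SimpleGraph VG} {H : SimpleGraph VH} (e : F ≃g F') (h : Arrows F G H) :
    Arrows F' G H := by
  intro R hR
  have hle : R.comap e ≤ F := by
    intro u v huv
    exact e.map_adj_iff.mp (hR huv)
  rcases h (R.comap e) hle with hr | hb
  · left
    exact hr.mono ⟨e, fun {u v} h => h⟩ e.injective
  · right
    refine hb.mono ⟨e, fun {u v} h => ?_⟩ e.injective
    · simp only [sdiff_adj, comap_adj] at h ⊢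
      exact ⟨e.map_adj_iff.mpr h.1, h.2⟩

lemma ncard_edgeSet_iso {VF VF' : Type*} {F : SimpleGraph VF} {F' : SimpleGraph VF'}
    (e : F ≃g F') : F'.edgeSet.ncard = F.edgeSet.ncard := by
  rw [← Nat.card_coe_set_eq, ← Nat.card_coe_set_eq]
  exact Nat.card_congr e.mapEdgeSet.symm

/-- `s` disjoint copies of `G`. -/
def Copies {V : Type*} (s : ℕ) (G : SimpleGraph V) : SimpleGraph (Fin s × V) where
  Adj x y := x.1 = y.1 ∧ G.Adj x.2 y.2
  symm := ⟨fun _ _ h => ⟨h.1.symm, h.2.symm⟩⟩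
  loopless := ⟨fun _ h => G.loopless.irrefl _ h.2⟩

lemma copies_arrows {V : Type*} (s : ℕ) (G : SimpleGraph V) :
    Arrows (Copies s G) (MatchingGraph s) G := by
  intro R hR
  by_cases hc : ∀ i : Fin s, ∃ u v, R.Adj (i, u) (i, v)
  · left
    choose u v huv using hc
    have hne : ∀ i, u i ≠ v i := fun i => (hR (huv i)).2.ne
    set f0 : Fin s × Fin 2 → Fin s × V := fun x => (x.1, if x.2 = 0 then u x.1 else v x.1)
      with hf0
    have hadj : ∀ {a b : Fin s × Fin 2}, (MatchingGraph s).Adj a b → R.Adj (f0 a) (f0 b) := by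
      rintro ⟨i, k⟩ ⟨j, k'⟩ ⟨h1, h2⟩
      dsimp at h1 h2
      subst h1
      have : (k = 0 ∧ k' = 1) ∨ (k = 1 ∧ k' = 0) := by omega
      rcases this with ⟨hk, hk'⟩ | ⟨hk, hk'⟩
      · subst hk; subst hk'; simpa [hf0] using huv i
      · subst hk; subst hk'; simpa [hf0] using (huv i).symm
    have hinj : Function.Injective f0 := by
      rintro ⟨i, k⟩ ⟨j, k'⟩ h
      simp only [hf0, Prod.mk.injEq] at h
      obtain ⟨h1, h2⟩ := h
      subst h1
      have hk : k = k' := by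
        by_contra hkk
        have : (k = 0 ∧ k' = 1) ∨ (k = 1 ∧ k' = 0) := by omega
        rcases this with ⟨hk, hk'⟩ | ⟨hk, hk'⟩
        · subst hk; subst hk'; simp at h2; exact hne i h2
        · subst hk; subst hk'; simp at h2; exact hne i h2.symm
      subst hk; rfl
    exact ⟨⟨f0, hadj⟩, hinj⟩
  · right
    push_neg at hc
    obtain ⟨i, hi⟩ := hc
    refine ⟨⟨fun w => (i, w), fun {a b} hab => ?_⟩, fun a b hab => ?_⟩
    · exact ⟨⟨rfl, hab⟩, hi a b⟩
    · exact ((Prod.mk.injEq _ _ _ _).mp hab).2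

lemma sum_arrows_matching {V₁ V₂ W : Type*} {F₁ : SimpleGraph V₁} {F₂ : SimpleGraph V₂}
    {G : SimpleGraph W} {s t : ℕ}
    (h₁ : Arrows F₁ (MatchingGraph s) G) (h₂ : Arrows F₂ (MatchingGraph t) G) :
    Arrows (F₁ ⊕g F₂) (MatchingGraph (s + t)) G := by
  intro R hR
  have hle₁ : R.comap Sum.inl ≤ F₁ := by
    intro u v huv
    simpa using hR huv
  have hle₂ : R.comap Sum.inr ≤ F₂ := by
    intro u v huv
    simpa using hR huv
  rcases h₁ (R.comap Sum.inl) hle₁ with hr₁ | hb₁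
  · rcases h₂ (R.comap Sum.inr) hle₂ with hr₂ | hb₂
    · left
      obtain ⟨g₁, hg₁⟩ := hr₁
      obtain ⟨g₂, hg₂⟩ := hr₂
      set f0 : Fin (s + t) × Fin 2 → V₁ ⊕ V₂ := fun x =>
        if h : (x.1 : ℕ) < s then Sum.inl (g₁ (⟨x.1, h⟩, x.2))
        else Sum.inr (g₂ (⟨(x.1 : ℕ) - s, by omega⟩, x.2)) with hf0
      have hadj : ∀ {a b : Fin (s + t) × Fin 2}, (MatchingGraph (s + t)).Adj a b →
          R.Adj (f0 a) (f0 b) := by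
        rintro ⟨i, k⟩ ⟨j, k'⟩ ⟨h1, h2⟩
        dsimp at h1 h2
        subst h1
        by_cases hi : (i : ℕ) < s
        · have := g₁.map_rel' (a := (⟨i, hi⟩, k)) (b := (⟨i, hi⟩, k')) ⟨rfl, h2⟩
          simpa [hf0, hi] using this
        · have := g₂.map_rel' (a := (⟨(i : ℕ) - s, by omega⟩, k))
            (b := (⟨(i : ℕ) - s, by omega⟩, k')) ⟨rfl, h2⟩
          simpa [hf0, hi] using this
      have hinj : Function.Injective f0 := by
        rintro ⟨i, k⟩ ⟨j, k'⟩ h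
        by_cases hi : (i : ℕ) < s <;> by_cases hj : (j : ℕ) < s <;>
          simp only [hf0, hi, hj, dif_pos, dif_neg, not_false_iff, dite_true, dite_false] at h
        · rw [Sum.inl.injEq] at h
          have := hg₁ h
          simp only [Prod.mk.injEq, Fin.mk.injEq] at this
          exact Prod.ext (Fin.ext this.1) this.2
        · exact absurd h (Sum.inl_ne_inr)
        · exact absurd h (Sum.inr_ne_inl)
        · rw [Sum.inr.injEq] at h
          have := hg₂ h
          simp only [Prod.mk.injEq, Fin.mk.injEq] at this
          have hij : (i : ℕ) = (j : ℕ) := by have := this.1; omega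
          exact Prod.ext (Fin.ext hij) this.2
      exact ⟨⟨f0, hadj⟩, hinj⟩
    · right
      refine hb₂.mono ⟨Sum.inr, fun {a b} hab => ?_⟩ Sum.inr_injective
      obtain ⟨hab1, hab2⟩ := hab
      exact ⟨by simpa using hab1, hab2⟩
  · right
    refine hb₁.mono ⟨Sum.inl, fun {a b} hab => ?_⟩ Sum.inl_injective
    obtain ⟨hab1, hab2⟩ := hab
    exact ⟨by simpa using hab1, hab2⟩

lemma edgeSet_sum {α β : Type*} (F₁ : SimpleGraph α) (F₂ : SimpleGraph β) :
    (F₁ ⊕g F₂).edgeSet = Sym2.map Sum.inl '' F₁.edgeSet ∪ Sym2.map Sum.inr '' F₂.edgeSet := by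
  ext e
  induction e using Sym2.ind with
  | _ x y =>
    simp only [Set.mem_union, Set.mem_image, Sym2.exists, mem_edgeSet, Sym2.map_pair_eq,
      Sym2.eq_iff]
    cases x <;> cases y <;> simp_all
    · constructor
      · exact fun a => ⟨_, _, a, Or.inl ⟨rfl, rfl⟩⟩
      · rintro ⟨u, v, huv, ⟨rfl, rfl⟩ | ⟨rfl, rfl⟩⟩
        · exact huv
        · exact huv.symm
    · constructor
      · exact fun a => ⟨_, _, a, Or.inl ⟨rfl, rfl⟩⟩
      · rintro ⟨u, v, huv, ⟨rfl, rfl⟩ | ⟨rfl, rfl⟩⟩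
        · exact huv
        · exact huv.symm

lemma ncard_edgeSet_sum {α β : Type*} [Fintype α] [Fintype β]
    (F₁ : SimpleGraph α) (F₂ : SimpleGraph β) :
    (F₁ ⊕g F₂).edgeSet.ncard = F₁.edgeSet.ncard + F₂.edgeSet.ncard := by
  have hdisj : Disjoint (Sym2.map (Sum.inl : α → α ⊕ β) '' F₁.edgeSet)
      (Sym2.map (Sum.inr : β → α ⊕ β) '' F₂.edgeSet) := by
    rw [Set.disjoint_left]
    rintro e ⟨e₁, -, rfl⟩ ⟨e₂, -, he⟩
    induction e₁ using Sym2.ind with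
    | _ x y =>
      induction e₂ using Sym2.ind with
      | _ u v => simp [Sym2.map_pair_eq, Sym2.eq_iff] at he
  rw [edgeSet_sum, Set.ncard_union_eq hdisj (Set.toFinite _) (Set.toFinite _),
    Set.ncard_image_of_injective _ (Sym2.map.injective Sum.inl_injective),
    Set.ncard_image_of_injective _ (Sym2.map.injective Sum.inr_injective)]

lemma mem_ramsey_set {W VG VH : Type*} [Fintype W] {G : SimpleGraph VG} {H : SimpleGraph VH}
    (F : SimpleGraph W) (h : Arrows F G H) :
    F.edgeSet.ncard ∈
      {m : ℕ | ∃ (n : ℕ) (F' : SimpleGraph (Fin n)), Arrows F' G H ∧ F'.edgeSet.ncard = m} := by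
  classical
  let e := Fintype.equivFin W
  exact ⟨Fintype.card W, F.map e.toEmbedding, arrows_of_iso (SimpleGraph.Iso.map e F) h,
    (ncard_edgeSet_iso (SimpleGraph.Iso.map e F)).symm ▸ rfl⟩

theorem stmt1 {V : Type*} [Fintype V] (G : SimpleGraph V) (hG : G.edgeSet.Nonempty)
    (s t : ℕ) (hs : 1 ≤ s) (ht : 1 ≤ t) :
    sizeRamsey (MatchingGraph (s + t)) G ≤
      sizeRamsey (MatchingGraph s) G + sizeRamsey (MatchingGraph t) G := by
  classical
  have hnsS : {m : ℕ | ∃ (n : ℕ) (F : SimpleGraph (Fin n)),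
      Arrows F (MatchingGraph s) G ∧ F.edgeSet.ncard = m}.Nonempty :=
    ⟨_, mem_ramsey_set (Copies s G) (copies_arrows s G)⟩
  have hnsT : {m : ℕ | ∃ (n : ℕ) (F : SimpleGraph (Fin n)),
      Arrows F (MatchingGraph t) G ∧ F.edgeSet.ncard = m}.Nonempty :=
    ⟨_, mem_ramsey_set (Copies t G) (copies_arrows t G)⟩
  obtain ⟨n₁, F₁, hF₁, hc₁⟩ := Nat.sInf_mem hnsS
  obtain ⟨n₂, F₂, hF₂, hc₂⟩ := Nat.sInf_mem hnsT
  have harr := sum_arrows_matching hF₁ hF₂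
  have hmem := mem_ramsey_set (F₁ ⊕g F₂) harr
  rw [ncard_edgeSet_sum, hc₁, hc₂] at hmem
  exact Nat.sInf_le hmem
end

section
/- For every nonempty graph G, r̂_∞(G) ≥ Δ(G)/|E(G)|, where r̂_∞(G) = lim_{t→∞} r̂(tK₂, G)/(t·|E(G)|). -/
open SimpleGraph Filter Topology

private lemma contains_mono {V W : Type*} {A B : SimpleGraph V} (h : A ≤ B)
    {G : SimpleGraph W} (hc : Contains A G) : Contains B G := by
  obtain ⟨f, hf⟩ := hc
  exact ⟨(SimpleGraph.Hom.ofLE h).comp f, hf⟩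

private lemma contains_matching_zero {α : Type*} (R : SimpleGraph α) :
    Contains R (MatchingGraph 0) :=
  ⟨⟨fun x => x.1.elim0, fun {x} _ _ => x.1.elim0⟩, fun x => x.1.elim0⟩

private lemma exists_cover {n : ℕ} : ∀ (t : ℕ) (R : SimpleGraph (Fin n)),
    ¬ Contains R (MatchingGraph t) →
    ∃ S : Finset (Fin n), S.card ≤ 2 * t ∧ ∀ x y, R.Adj x y → x ∈ S ∨ y ∈ S := by
  intro t
  induction t with
  | zero => exact fun R hR => absurd (contains_matching_zero R) hR
  | succ t ih =>
    intro R hR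
    by_cases hE : ∃ a b, R.Adj a b
    · obtain ⟨a, b, hab⟩ := hE
      set R' : SimpleGraph (Fin n) :=
        { Adj := fun x y => R.Adj x y ∧ x ≠ a ∧ x ≠ b ∧ y ≠ a ∧ y ≠ b
          symm := ⟨fun x y h => ⟨h.1.symm, h.2.2.2.1, h.2.2.2.2, h.2.1, h.2.2.1⟩⟩
          loopless := ⟨fun x h => R.loopless.irrefl x h.1⟩ } with hR'def
      have hR' : ¬ Contains R' (MatchingGraph t) := by
        rintro ⟨f, hf⟩
        apply hR
        have hfa : ∀ (i : Fin t) (j : Fin 2), f (i, j) ≠ a ∧ f (i, j) ≠ b := by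
          intro i j
          have h01 : R'.Adj (f (i, 0)) (f (i, 1)) :=
            f.map_rel (show (MatchingGraph t).Adj (i, 0) (i, 1) from ⟨rfl, (by decide : (0 : Fin 2) ≠ 1)⟩)
          fin_cases j
          · exact ⟨h01.2.1, h01.2.2.1⟩
          · exact ⟨h01.2.2.2.1, h01.2.2.2.2⟩
        set gg : Fin (t + 1) × Fin 2 → Fin n :=
          fun p => if h : (p.1 : ℕ) < t then f (⟨p.1, h⟩, p.2)
            else if p.2 = 0 then a else b with hgg
        have hgg1 : ∀ (i : Fin (t + 1)) (h : (i : ℕ) < t) (j : Fin 2),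
            gg (i, j) = f (⟨(i : ℕ), h⟩, j) := by
          intro i h j; simp only [hgg]; rw [dif_pos h]
        have hgg2 : ∀ (i : Fin (t + 1)), ¬ (i : ℕ) < t → ∀ (j : Fin 2),
            gg (i, j) = if j = 0 then a else b := by
          intro i h j; simp only [hgg]; rw [dif_neg h]
        refine ⟨⟨gg, ?_⟩, ?_⟩
        · rintro ⟨i, j⟩ ⟨i', j'⟩ ⟨h1, h2⟩
          dsimp only at h1 h2
          subst h1
          show R.Adj (gg (i, j)) (gg (i, j'))
          by_cases hlt : (i : ℕ) < t
          · rw [hgg1 i hlt j, hgg1 i hlt j']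
            exact (f.map_rel (show (MatchingGraph t).Adj (⟨(i : ℕ), hlt⟩, j)
              (⟨(i : ℕ), hlt⟩, j') from ⟨rfl, h2⟩)).1
          · rw [hgg2 i hlt j, hgg2 i hlt j']
            by_cases hj : j = 0
            · have hj' : j' ≠ 0 := fun hc => h2 (hj.trans hc.symm)
              rw [if_pos hj, if_neg hj']
              exact hab
            · have hj' : j' = 0 := by
                apply Fin.ext
                have hv := j.isLt; have hv' := j'.isLt
                have h0 : (j : ℕ) ≠ 0 := fun hc => hj (Fin.ext hc)
                have h0' : (j : ℕ) ≠ (j' : ℕ) := fun hc => h2 (Fin.ext hc)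
                omega
              rw [if_neg hj, if_pos hj']
              exact hab.symm
        · rintro ⟨i, j⟩ ⟨i', j'⟩ h
          replace h : gg (i, j) = gg (i', j') := h
          by_cases hi : (i : ℕ) < t <;> by_cases hi' : (i' : ℕ) < t
          · rw [hgg1 i hi j, hgg1 i' hi' j'] at h
            have h3 := hf h
            rw [Prod.mk.injEq] at h3
            obtain ⟨h3a, h3b⟩ := h3
            rw [Fin.mk.injEq] at h3a
            simp only [Prod.mk.injEq]
            exact ⟨Fin.ext h3a, h3b⟩
          · rw [hgg1 i hi j, hgg2 i' hi' j'] at h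
            split_ifs at h
            exacts [absurd h (hfa _ _).1, absurd h (hfa _ _).2]
          · rw [hgg2 i hi j, hgg1 i' hi' j'] at h
            split_ifs at h
            exacts [absurd h.symm (hfa _ _).1, absurd h.symm (hfa _ _).2]
          · rw [hgg2 i hi j, hgg2 i' hi' j'] at h
            have hii : i = i' := by
              apply Fin.ext
              have := i.isLt; have := i'.isLt
              omega
            subst hii
            simp only [Prod.mk.injEq, true_and]
            by_cases hj : j = 0 <;> by_cases hj' : j' = 0
            · rw [hj, hj']
            · rw [if_pos hj, if_neg hj'] at h
              exact absurd h hab.ne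
            · rw [if_neg hj, if_pos hj'] at h
              exact absurd h.symm hab.ne
            · apply Fin.ext
              have hv := j.isLt; have hv' := j'.isLt
              have h0 : (j : ℕ) ≠ 0 := fun hc => hj (Fin.ext hc)
              have h0' : (j' : ℕ) ≠ 0 := fun hc => hj' (Fin.ext hc)
              omega
      obtain ⟨S', hS'card, hS'cov⟩ := ih R' hR'
      refine ⟨insert a (insert b S'), ?_, ?_⟩
      · calc (insert a (insert b S')).card ≤ (insert b S').card + 1 :=
              Finset.card_insert_le _ _
          _ ≤ S'.card + 1 + 1 := by
              have := Finset.card_insert_le b S'; omega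
          _ ≤ 2 * (t + 1) := by omega
      · intro x y hxy
        by_cases hx : x = a ∨ x = b
        · left; rcases hx with h | h <;> simp [h]
        by_cases hy : y = a ∨ y = b
        · right; rcases hy with h | h <;> simp [h]
        push_neg at hx hy
        rcases hS'cov x y ⟨hxy, hx.1, hx.2, hy.1, hy.2⟩ with h | h
        · left; simp [h]
        · right; simp [h]
    · push_neg at hE
      exact ⟨∅, by simp, fun x y hxy => absurd hxy (hE x y)⟩

private lemma arrows_top {V : Type*} [Fintype V] (G : SimpleGraph V) (t : ℕ) :
    Arrows (⊤ : SimpleGraph (Fin (Fintype.card V + 2 * t))) (MatchingGraph t) G := by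
  intro R hR
  by_cases hc : Contains R (MatchingGraph t)
  · exact Or.inl hc
  right
  obtain ⟨S, hScard, hScov⟩ := exists_cover t R hc
  have hcard : Fintype.card V ≤ Fintype.card {x : Fin (Fintype.card V + 2 * t) // x ∉ S} := by
    classical
    have h1 : Fintype.card {x : Fin (Fintype.card V + 2 * t) // x ∈ S} = S.card :=
      Fintype.card_coe S
    have h2 := Fintype.card_subtype_compl (fun x : Fin (Fintype.card V + 2 * t) => x ∈ S)
    rw [h2, h1, Fintype.card_fin]
    omega
  obtain ⟨e⟩ := Function.Embedding.nonempty_of_card_le hcard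
  refine ⟨⟨fun v => (e v : Fin (Fintype.card V + 2 * t)), ?_⟩, ?_⟩
  · intro u w huw
    rw [SimpleGraph.sdiff_adj]
    constructor
    · rw [SimpleGraph.top_adj]
      intro hval
      exact G.ne_of_adj huw (e.injective (Subtype.val_injective hval))
    · intro hradj
      rcases hScov _ _ hradj with h | h
      · exact (e u).2 h
      · exact (e w).2 h
  · exact fun u w h => e.injective (Subtype.val_injective h)

private lemma matching_lower {V : Type*} [Fintype V] (G : SimpleGraph V) [DecidableRel G.Adj]
    (hG : G.edgeSet.Nonempty) :
    ∀ (t : ℕ) {n : ℕ} (F : SimpleGraph (Fin n)),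
      Arrows F (MatchingGraph t) G → t * G.maxDegree ≤ F.edgeSet.ncard := by
  intro t
  induction t with
  | zero => intro n F _; simp
  | succ t ih =>
    intro n F hF
    have hne : Nonempty V := by
      obtain ⟨e, he⟩ := hG
      revert he
      refine e.ind ?_
      intro x y _
      exact ⟨x⟩
    -- F contains G
    have hFG : Contains F G := by
      rcases hF ⊥ bot_le with h | h
      · obtain ⟨f, hf⟩ := h
        exact absurd (f.map_rel (show (MatchingGraph (t + 1)).Adj (⟨0, t.succ_pos⟩, 0)
          (⟨0, t.succ_pos⟩, 1) from ⟨rfl, (by decide : (0 : Fin 2) ≠ 1)⟩)) (by simp)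
      · exact contains_mono sdiff_le h
    obtain ⟨f, hf⟩ := hFG
    obtain ⟨w, hw⟩ := G.exists_maximal_degree_vertex
    set v : Fin n := f w with hv
    set F' := F.deleteEdges (F.incidenceSet v) with hF'
    have hIncSub : F.incidenceSet v ⊆ F.edgeSet := F.incidenceSet_subset v
    have hEdge : F'.edgeSet = F.edgeSet \ F.incidenceSet v := F.edgeSet_deleteEdges _
    -- maxDegree ≤ ncard of incidence set at v
    have hdeg : G.maxDegree ≤ (F.incidenceSet v).ncard := by
      have h1 : (G.neighborSet w).ncard = G.degree w := by
        rw [Set.ncard_eq_toFinset_card', SimpleGraph.degree, SimpleGraph.neighborFinset_def]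
      have h2 : f '' (G.neighborSet w) ⊆ F.neighborSet v := by
        rintro x ⟨u, hu, rfl⟩
        exact f.map_rel hu
      have h3 : (f '' (G.neighborSet w)).ncard = (G.neighborSet w).ncard :=
        Set.ncard_image_of_injective _ hf
      have h4 : (F.neighborSet v).ncard = (F.incidenceSet v).ncard := by
        rw [← Nat.card_coe_set_eq, ← Nat.card_coe_set_eq]
        exact (Nat.card_congr (F.incidenceSetEquivNeighborSet v)).symm
      calc G.maxDegree = G.degree w := hw
        _ = (G.neighborSet w).ncard := h1.symm
        _ = (f '' (G.neighborSet w)).ncard := h3.symm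
        _ ≤ (F.neighborSet v).ncard := Set.ncard_le_ncard h2 (Set.toFinite _)
        _ = (F.incidenceSet v).ncard := h4
    -- F' arrows (tK₂, G)
    have harrow : Arrows F' (MatchingGraph t) G := by
      intro R' hR'
      set star : SimpleGraph (Fin n) :=
        { Adj := fun x y => F.Adj x y ∧ (x = v ∨ y = v)
          symm := ⟨fun x y h => ⟨h.1.symm, h.2.symm⟩⟩
          loopless := ⟨fun x h => F.loopless.irrefl x h.1⟩ } with hstar
      have hstarle : star ≤ F := fun x y h => h.1
      have hF'le : F' ≤ F := F.deleteEdges_le _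
      rcases hF (R' ⊔ star) (sup_le (hR'.trans hF'le) hstarle) with h | h
      · left
        obtain ⟨g, hg⟩ := h
        have hkey : ∃ k : Fin (t + 1), ∀ i : Fin (t + 1), i ≠ k → ∀ j : Fin 2, g (i, j) ≠ v := by
          by_cases hb : ∃ i j, g (i, j) = v
          · obtain ⟨k, jk, hk⟩ := hb
            refine ⟨k, fun i hik j hij => ?_⟩
            have h5 : (i, j) = (k, jk) := hg (hij.trans hk.symm)
            exact hik (congrArg Prod.fst h5)
          · push_neg at hb
            exact ⟨⟨0, t.succ_pos⟩, fun i _ j => hb i j⟩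
        obtain ⟨k, hk⟩ := hkey
        refine ⟨⟨fun p => g (k.succAbove p.1, p.2), ?_⟩, ?_⟩
        · rintro ⟨i, j⟩ ⟨i', j'⟩ ⟨h1, h2⟩
          dsimp only at h1 h2 ⊢
          subst h1
          have hadj : (R' ⊔ star).Adj (g (k.succAbove i, j)) (g (k.succAbove i, j')) :=
            g.map_rel (show (MatchingGraph (t + 1)).Adj (k.succAbove i, j) (k.succAbove i, j')
              from ⟨rfl, h2⟩)
          rcases hadj with h | h
          · exact h
          · rcases h.2 with hv' | hv'
            · exact absurd hv' (hk _ (Fin.succAbove_ne k i) j)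
            · exact absurd hv' (hk _ (Fin.succAbove_ne k i) j')
        · rintro ⟨i, j⟩ ⟨i', j'⟩ h
          replace h : g (k.succAbove i, j) = g (k.succAbove i', j') := h
          have h5 := hg h
          rw [Prod.mk.injEq] at h5
          simp only [Prod.mk.injEq]
          exact ⟨Fin.succAbove_right_injective h5.1, h5.2⟩
      · right
        refine contains_mono ?_ h
        intro x y hxy
        rw [SimpleGraph.sdiff_adj] at hxy
        rw [SimpleGraph.sdiff_adj, SimpleGraph.deleteEdges_adj]
        have hnstar : ¬ star.Adj x y := fun hs => hxy.2 (Or.inr hs)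
        refine ⟨⟨hxy.1, ?_⟩, fun hr => hxy.2 (Or.inl hr)⟩
        intro hmem
        apply hnstar
        refine ⟨hxy.1, ?_⟩
        have h6 := hmem.2
        rw [Sym2.mem_iff] at h6
        exact h6.imp Eq.symm Eq.symm
    -- arithmetic
    have hsub : (F.incidenceSet v).ncard ≤ F.edgeSet.ncard :=
      Set.ncard_le_ncard hIncSub (Set.toFinite _)
    have h1 : F'.edgeSet.ncard + (F.incidenceSet v).ncard = F.edgeSet.ncard := by
      rw [hEdge, Set.ncard_diff hIncSub (Set.toFinite _)]
      exact Nat.sub_add_cancel hsub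
    calc (t + 1) * G.maxDegree = t * G.maxDegree + G.maxDegree := by ring
      _ ≤ F'.edgeSet.ncard + (F.incidenceSet v).ncard := Nat.add_le_add (ih F' harrow) hdeg
      _ = F.edgeSet.ncard := h1

theorem stmt11 {V : Type*} [Fintype V] (G : SimpleGraph V) [DecidableRel G.Adj]
    (hG : G.edgeSet.Nonempty) :
    (G.maxDegree : ℝ) / G.edgeSet.ncard ≤ rhatInf G := by
  have hfin : G.edgeSet.Finite := G.edgeSet.toFinite
  have hEpos : 0 < G.edgeSet.ncard := (Set.ncard_pos hfin).mpr hG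
  have hEposR : (0 : ℝ) < (G.edgeSet.ncard : ℝ) := by exact_mod_cast hEpos
  rw [rhatInf]
  apply le_ciInf
  intro t
  have hkey : (t : ℕ) * G.maxDegree ≤ sizeRamsey (MatchingGraph t) G := by
    have hne : {m : ℕ | ∃ (n : ℕ) (F : SimpleGraph (Fin n)),
        Arrows F (MatchingGraph (t : ℕ)) G ∧ F.edgeSet.ncard = m}.Nonempty :=
      ⟨_, _, _, arrows_top G (t : ℕ), rfl⟩
    obtain ⟨n, F, hF, hFm⟩ := Nat.sInf_mem hne
    rw [sizeRamsey, ← hFm]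
    exact matching_lower G hG (t : ℕ) F hF
  have htpos : (0 : ℝ) < ((t : ℕ) : ℝ) := by exact_mod_cast t.pos
  have h6 : ((t : ℕ) : ℝ) * (G.maxDegree : ℝ) ≤ (sizeRamsey (MatchingGraph (t : ℕ)) G : ℝ) := by
    exact_mod_cast hkey
  rw [div_le_div_iff₀ hEposR (mul_pos htpos hEposR)]
  calc (G.maxDegree : ℝ) * (((t : ℕ) : ℝ) * (G.edgeSet.ncard : ℝ))
      = (((t : ℕ) : ℝ) * (G.maxDegree : ℝ)) * (G.edgeSet.ncard : ℝ) := by ring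
    _ ≤ (sizeRamsey (MatchingGraph (t : ℕ)) G : ℝ) * (G.edgeSet.ncard : ℝ) :=
        mul_le_mul_of_nonneg_right h6 hEposR.le
end

section
/- Let k ≥ 2 and ℓ₁ ≥ ℓ₂ ≥ ... ≥ ℓ_k ≥ 0 be integers, and let B = B(ℓ₁,...,ℓ_k) be the graph obtained from K_{k,k} by attaching ℓ_i pendant edges to the i-th vertex of one side. Set n = 2k + Σℓ_i. Then for every integer t ≥ 1, (t−1)(k+ℓ₁) + n + k(k−2) ≤ r̂(tK₂, B) ≤ n + (t−1)ℓ₁ + (k+t−1)² − 2k. -/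
open SimpleGraph Filter Topology

/-- The graph `B(ℓ₁, …, ℓ_k)`: `K_{k,k}` with `ℓ i` pendant edges attached to the
`i`-th vertex of the left side. -/
def Bgraph (k : ℕ) (ℓ : Fin k → ℕ) :
    SimpleGraph ((Fin k ⊕ Fin k) ⊕ (Σ i : Fin k, Fin (ℓ i))) where
  Adj x y :=
    (∃ i j, x = Sum.inl (Sum.inl i) ∧ y = Sum.inl (Sum.inr j)) ∨
    (∃ i j, x = Sum.inl (Sum.inr j) ∧ y = Sum.inl (Sum.inl i)) ∨
    (∃ i a, x = Sum.inl (Sum.inl i) ∧ y = Sum.inr ⟨i, a⟩) ∨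
    (∃ i a, x = Sum.inr ⟨i, a⟩ ∧ y = Sum.inl (Sum.inl i))
  symm := by
    constructor
    rintro x y (⟨i, j, rfl, rfl⟩ | ⟨i, j, rfl, rfl⟩ | ⟨i, a, rfl, rfl⟩ | ⟨i, a, rfl, rfl⟩)
    · exact Or.inr (Or.inl ⟨i, j, rfl, rfl⟩)
    · exact Or.inl ⟨i, j, rfl, rfl⟩
    · exact Or.inr (Or.inr (Or.inr ⟨i, a, rfl, rfl⟩))
    · exact Or.inr (Or.inr (Or.inl ⟨i, a, rfl, rfl⟩))
  loopless := by
    constructor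
    rintro x (⟨i, j, rfl, h⟩ | ⟨i, j, rfl, h⟩ | ⟨i, a, rfl, h⟩ | ⟨i, a, rfl, h⟩) <;> simp at h

namespace Aux19

open Sum Function

/-- vertex type of `Bgraph`. -/
abbrev BV (k : ℕ) (ℓ : Fin k → ℕ) := (Fin k ⊕ Fin k) ⊕ (Σ i : Fin k, Fin (ℓ i))

def Bmap {a b : ℕ} (L : Fin a → ℕ) (L' : Fin b → ℕ) (σ τ : Fin a → Fin b)
    (hcap : ∀ x, L x ≤ L' (σ x)) : BV a L → BV b L'
  | Sum.inl (Sum.inl i) => Sum.inl (Sum.inl (σ i))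
  | Sum.inl (Sum.inr j) => Sum.inl (Sum.inr (τ j))
  | Sum.inr ⟨i, a'⟩ => Sum.inr ⟨σ i, ⟨a'.val, lt_of_lt_of_le a'.isLt (hcap i)⟩⟩

lemma Bmap_adj {a b : ℕ} (L : Fin a → ℕ) (L' : Fin b → ℕ) (σ τ : Fin a → Fin b)
    (hcap : ∀ x, L x ≤ L' (σ x)) {x y : BV a L} (h : (Bgraph a L).Adj x y) :
    (Bgraph b L').Adj (Bmap L L' σ τ hcap x) (Bmap L L' σ τ hcap y) := by
  rcases h with ⟨i, j, rfl, rfl⟩ | ⟨i, j, rfl, rfl⟩ | ⟨i, a', rfl, rfl⟩ | ⟨i, a', rfl, rfl⟩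
  · exact Or.inl ⟨σ i, τ j, rfl, rfl⟩
  · exact Or.inr (Or.inl ⟨σ i, τ j, rfl, rfl⟩)
  · exact Or.inr (Or.inr (Or.inl ⟨σ i, ⟨a'.val, lt_of_lt_of_le a'.isLt (hcap i)⟩, rfl, rfl⟩))
  · exact Or.inr (Or.inr (Or.inr ⟨σ i, ⟨a'.val, lt_of_lt_of_le a'.isLt (hcap i)⟩, rfl, rfl⟩))

lemma Bmap_inj {a b : ℕ} (L : Fin a → ℕ) (L' : Fin b → ℕ) (σ τ : Fin a → Fin b)
    (hcap : ∀ x, L x ≤ L' (σ x)) (hσ : Injective σ) (hτ : Injective τ) :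
    Injective (Bmap L L' σ τ hcap) := by
  rintro ((i | j) | ⟨i, a'⟩) ((i' | j') | ⟨i', a''⟩) h <;> simp only [Bmap] at h
  · injection h with h; injection h with h; rw [hσ h]
  · exact absurd h (by simp)
  · exact absurd h (by simp)
  · exact absurd h (by simp)
  · injection h with h; injection h with h; rw [hτ h]
  · exact absurd h (by simp)
  · exact absurd h (by simp)
  · exact absurd h (by simp)
  · injection h with h
    have h1 : σ i = σ i' := congrArg Sigma.fst h
    obtain rfl := hσ h1
    have h2 : HEq (⟨(a' : ℕ), lt_of_lt_of_le a'.isLt (hcap i)⟩ : Fin (L' (σ i)))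
        (⟨(a'' : ℕ), lt_of_lt_of_le a''.isLt (hcap i)⟩ : Fin (L' (σ i))) :=
      (Sigma.ext_iff.mp h).2
    have h2' := eq_of_heq h2
    have h3 := congrArg Fin.val h2'
    have h4 : a' = a'' := Fin.ext (by simpa using h3)
    rw [h4]

def Bhom {a b : ℕ} (L : Fin a → ℕ) (L' : Fin b → ℕ) (σ τ : Fin a → Fin b)
    (hcap : ∀ x, L x ≤ L' (σ x)) : Bgraph a L →g Bgraph b L' :=
  ⟨Bmap L L' σ τ hcap, Bmap_adj L L' σ τ hcap⟩

lemma contains_sdiff {V W : Type*} {F R : SimpleGraph V} {G : SimpleGraph W}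
    (f : G →g F) (hf : Function.Injective f)
    (h : ∀ x y, G.Adj x y → ¬ R.Adj (f x) (f y)) : Contains (F \ R) G :=
  ⟨⟨⇑f, fun hadj => (SimpleGraph.sdiff_adj _ _ _ _).mpr ⟨f.map_adj hadj, h _ _ hadj⟩⟩, hf⟩


def extL {k : ℕ} (hk : 0 < k) (ℓ : Fin k → ℕ) (s : ℕ) : Fin (k + s) → ℕ :=
  fun i => if h : (i : ℕ) < k then ℓ ⟨i, h⟩ else ℓ ⟨0, hk⟩

def skipTo {m : ℕ} (i : Fin (m + 1)) : Fin m → Fin (m + 1) :=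
  fun x => if (x : ℕ) = (i : ℕ) then Fin.last m else x.castSucc

lemma skipTo_inj {m : ℕ} (i : Fin (m + 1)) : Injective (skipTo i) := by
  intro x y h
  unfold skipTo at h
  split_ifs at h with h1 h2 h2
  · exact Fin.ext (h1.trans h2.symm)
  · exact absurd (congrArg Fin.val h) (by simp [Fin.last]; omega)
  · exact absurd (congrArg Fin.val h) (by simp [Fin.last]; omega)
  · exact Fin.ext (by simpa [Fin.castSucc, Fin.ext_iff] using h)

lemma skipTo_ne {m : ℕ} (i : Fin (m + 1)) (x : Fin m) : skipTo i x ≠ i := by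
  unfold skipTo
  split_ifs with h1
  · intro hc
    have := congrArg Fin.val hc
    simp [Fin.last] at this
    omega
  · intro hc
    exact h1 (by simpa [Fin.ext_iff] using congrArg Fin.val hc)

lemma extL_le_l0 {k : ℕ} (hk : 0 < k) (ℓ : Fin k → ℕ)
    (hmono : ∀ i j : Fin k, i ≤ j → ℓ j ≤ ℓ i) (s : ℕ) (x : Fin (k + s)) :
    extL hk ℓ s x ≤ ℓ ⟨0, hk⟩ := by
  unfold extL
  split_ifs with h
  · exact hmono ⟨0, hk⟩ ⟨x, h⟩ (by simp [Fin.le_def])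
  · exact le_rfl

lemma extL_skipTo_cap {k : ℕ} (hk : 0 < k) (ℓ : Fin k → ℕ)
    (hmono : ∀ i j : Fin k, i ≤ j → ℓ j ≤ ℓ i) (s : ℕ) (i : Fin (k + s + 1))
    (x : Fin (k + s)) :
    extL hk ℓ s x ≤ extL hk ℓ (s + 1) (skipTo i x) := by
  unfold skipTo
  split_ifs with h1
  · have hval : ((Fin.last (k + s) : Fin (k + s + 1)) : ℕ) = k + s := rfl
    have : extL hk ℓ (s + 1) (Fin.last (k + s)) = ℓ ⟨0, hk⟩ := by
      unfold extL
      rw [dif_neg]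
      omega
    exact le_trans (extL_le_l0 hk ℓ hmono s x) (le_of_eq this.symm)
  · unfold extL
    have hv : ((x.castSucc : Fin (k + s + 1)) : ℕ) = (x : ℕ) := rfl
    rw [hv]

/-- edge enumeration for Bgraph -/
def edgeEnum {b : ℕ} (L : Fin b → ℕ) : (Fin b × Fin b) ⊕ (Σ i : Fin b, Fin (L i)) → Sym2 (BV b L)
  | Sum.inl (i, j) => s(Sum.inl (Sum.inl i), Sum.inl (Sum.inr j))
  | Sum.inr ⟨i, a⟩ => s(Sum.inl (Sum.inl i), Sum.inr ⟨i, a⟩)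

lemma range_edgeEnum {b : ℕ} (L : Fin b → ℕ) :
    Set.range (edgeEnum L) = (Bgraph b L).edgeSet := by
  apply Set.eq_of_subset_of_subset
  · rintro z ⟨(⟨i, j⟩ | ⟨i, a⟩), rfl⟩
    · exact Or.inl ⟨i, j, rfl, rfl⟩
    · exact Or.inr (Or.inr (Or.inl ⟨i, a, rfl, rfl⟩))
  · intro z hz
    induction z using Sym2.ind with
    | _ x y =>
      rw [SimpleGraph.mem_edgeSet] at hz
      rcases hz with ⟨i, j, rfl, rfl⟩ | ⟨i, j, rfl, rfl⟩ | ⟨i, a, rfl, rfl⟩ | ⟨i, a, rfl, rfl⟩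
      · exact ⟨Sum.inl (i, j), rfl⟩
      · exact ⟨Sum.inl (i, j), Sym2.eq_swap⟩
      · exact ⟨Sum.inr ⟨i, a⟩, rfl⟩
      · exact ⟨Sum.inr ⟨i, a⟩, Sym2.eq_swap⟩

lemma edgeEnum_inj {b : ℕ} (L : Fin b → ℕ) : Injective (edgeEnum L) := by
  rintro ((⟨i, j⟩ | ⟨i, a⟩)) ((⟨i', j'⟩ | ⟨i', a'⟩)) h <;> simp only [edgeEnum] at h <;>
      rw [Sym2.eq_iff] at h
  · rcases h with ⟨h1, h2⟩ | ⟨h1, h2⟩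
    · injection h1 with h1; injection h1 with h1
      injection h2 with h2; injection h2 with h2
      rw [h1, h2]
    · exact absurd h1 (by simp)
  · rcases h with ⟨h1, h2⟩ | ⟨h1, h2⟩
    · exact absurd h2 (by simp)
    · exact absurd h1 (by simp)
  · rcases h with ⟨h1, h2⟩ | ⟨h1, h2⟩
    · exact absurd h2 (by simp)
    · exact absurd h1 (by simp)
  · rcases h with ⟨h1, h2⟩ | ⟨h1, h2⟩
    · injection h1 with h1; injection h1 with h1
      obtain rfl : i = i' := h1
      injection h2 with h2
      have h3 : (⟨i, a⟩ : Σ u : Fin b, Fin (L u)) = ⟨i, a'⟩ := h2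
      have h4 := eq_of_heq (Sigma.ext_iff.mp h3).2
      have h5 : a = a' := h4
      rw [h5]
    · exact absurd h1 (by simp)

lemma ncard_edgeSet_B {b : ℕ} (L : Fin b → ℕ) :
    (Bgraph b L).edgeSet.ncard = b * b + ∑ i, L i := by
  rw [← range_edgeEnum, ← Set.image_univ,
    Set.ncard_image_of_injective _ (edgeEnum_inj L), Set.ncard_univ, Nat.card_eq_fintype_card]
  simp


lemma fin2_cases (z : Fin 2) : z = 0 ∨ z = 1 := by
  rcases z with ⟨zv, hz⟩
  simp [Fin.ext_iff]
  omega

lemma Bmap_ne_left {a b : ℕ} (L : Fin a → ℕ) (L' : Fin b → ℕ) (σ τ : Fin a → Fin b)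
    (hcap : ∀ x, L x ≤ L' (σ x)) (i : Fin b) (hi : ∀ x, σ x ≠ i) :
    ∀ z, Bmap L L' σ τ hcap z ≠ Sum.inl (Sum.inl i) := by
  rintro ((x | y) | ⟨x, a'⟩) hc <;> simp only [Bmap] at hc
  · injection hc with hc; injection hc with hc; exact hi x hc
  · simp at hc
  · simp at hc

lemma Bmap_ne_right {a b : ℕ} (L : Fin a → ℕ) (L' : Fin b → ℕ) (σ τ : Fin a → Fin b)
    (hcap : ∀ x, L x ≤ L' (σ x)) (j : Fin b) (hj : ∀ y, τ y ≠ j) :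
    ∀ z, Bmap L L' σ τ hcap z ≠ Sum.inl (Sum.inr j) := by
  rintro ((x | y) | ⟨x, a'⟩) hc <;> simp only [Bmap] at hc
  · simp at hc
  · injection hc with hc; injection hc with hc; exact hj y hc
  · simp at hc

lemma Bmap_ne_pend {a b : ℕ} (L : Fin a → ℕ) (L' : Fin b → ℕ) (σ τ : Fin a → Fin b)
    (hcap : ∀ x, L x ≤ L' (σ x)) (i : Fin b) (hi : ∀ x, σ x ≠ i) (aa : Fin (L' i)) :
    ∀ z, Bmap L L' σ τ hcap z ≠ Sum.inr ⟨i, aa⟩ := by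
  rintro ((x | y) | ⟨x, a'⟩) hc <;> simp only [Bmap] at hc
  · simp at hc
  · simp at hc
  · injection hc with hc
    exact hi x (congrArg Sigma.fst hc)

def incl0 {k : ℕ} (s : ℕ) : Fin k → Fin (k + s) := fun i => ⟨(i : ℕ), by omega⟩

lemma incl0_inj {k s : ℕ} : Injective (incl0 (k := k) s) := fun x y h =>
  Fin.ext (by simpa [incl0] using congrArg Fin.val h)

lemma incl0_cap {k : ℕ} (hk : 0 < k) (ℓ : Fin k → ℕ) (s : ℕ) (x : Fin k) :
    ℓ x ≤ extL hk ℓ s (incl0 s x) := by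
  unfold extL incl0
  rw [dif_pos (show ((⟨(x : ℕ), by omega⟩ : Fin (k + s)) : ℕ) < k from x.isLt)]

lemma step_case {k : ℕ} (hk : 0 < k) (ℓ : Fin k → ℕ)
    (hmono : ∀ i j : Fin k, i ≤ j → ℓ j ≤ ℓ i) (s : ℕ)
    (ih : Arrows (Bgraph (k + s) (extL hk ℓ s)) (MatchingGraph (s + 1)) (Bgraph k ℓ))
    (R : SimpleGraph (BV (k + s + 1) (extL hk ℓ (s + 1))))
    (hR : R ≤ Bgraph (k + s + 1) (extL hk ℓ (s + 1)))
    (u v : BV (k + s + 1) (extL hk ℓ (s + 1))) (huv : R.Adj u v)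
    (i j : Fin (k + s + 1))
    (hu : u = Sum.inl (Sum.inl i) ∨ u = Sum.inl (Sum.inr j) ∨ ∃ a, u = Sum.inr ⟨i, a⟩)
    (hv : v = Sum.inl (Sum.inl i) ∨ v = Sum.inl (Sum.inr j) ∨ ∃ a, v = Sum.inr ⟨i, a⟩) :
    Contains R (MatchingGraph (s + 1 + 1)) ∨
      Contains (Bgraph (k + s + 1) (extL hk ℓ (s + 1)) \ R) (Bgraph k ℓ) := by
  classical
  have hcapσ : ∀ x, extL hk ℓ s x ≤ extL hk ℓ (s + 1) (skipTo i x) :=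
    extL_skipTo_cap hk ℓ hmono s i
  set emb := Bmap (extL hk ℓ s) (extL hk ℓ (s + 1)) (skipTo i) (skipTo j) hcapσ with hembdef
  have hembinj : Injective emb := Bmap_inj _ _ _ _ hcapσ (skipTo_inj i) (skipTo_inj j)
  have havu : ∀ z, emb z ≠ u := by
    intro z
    rcases hu with rfl | rfl | ⟨a, rfl⟩
    · exact Bmap_ne_left _ _ _ _ _ i (skipTo_ne i) z
    · exact Bmap_ne_right _ _ _ _ _ j (skipTo_ne j) z
    · exact Bmap_ne_pend _ _ _ _ _ i (skipTo_ne i) a z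
  have havv : ∀ z, emb z ≠ v := by
    intro z
    rcases hv with rfl | rfl | ⟨a, rfl⟩
    · exact Bmap_ne_left _ _ _ _ _ i (skipTo_ne i) z
    · exact Bmap_ne_right _ _ _ _ _ j (skipTo_ne j) z
    · exact Bmap_ne_pend _ _ _ _ _ i (skipTo_ne i) a z
  set R'' : SimpleGraph (BV (k + s) (extL hk ℓ s)) :=
    { Adj := fun x y => (Bgraph (k + s) (extL hk ℓ s)).Adj x y ∧ R.Adj (emb x) (emb y),
      symm := ⟨fun x y h => ⟨h.1.symm, h.2.symm⟩⟩,
      loopless := ⟨fun x h => (Bgraph (k + s) (extL hk ℓ s)).irrefl h.1⟩ } with hR''def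
  have hle'' : R'' ≤ Bgraph (k + s) (extL hk ℓ s) := by
    intro x y h
    exact h.1
  rcases ih R'' hle'' with ⟨c, hc⟩ | ⟨c, hc⟩
  · left
    set Mfun : Fin (s + 1 + 1) × Fin 2 → BV (k + s + 1) (extL hk ℓ (s + 1)) :=
      fun p => if h : (p.1 : ℕ) < s + 1 then emb (c (⟨(p.1 : ℕ), h⟩, p.2))
        else if p.2 = 0 then u else v with hM
    refine ⟨⟨Mfun, ?_⟩, ?_⟩
    · intro x y hxy
      obtain ⟨h1, h2⟩ := hxy
      simp only [hM]
      by_cases hlt : (x.1 : ℕ) < s + 1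
      · have hlt' : (y.1 : ℕ) < s + 1 := by rw [← h1]; exact hlt
        rw [dif_pos hlt, dif_pos hlt']
        have hval : ((x.1 : ℕ)) = (y.1 : ℕ) := congrArg Fin.val h1
        have hadj : (MatchingGraph (s + 1)).Adj (⟨(x.1 : ℕ), hlt⟩, x.2)
            (⟨(y.1 : ℕ), hlt'⟩, y.2) := by
          refine ⟨?_, h2⟩
          apply Fin.ext
          simpa using hval
        exact (c.map_adj hadj).2
      · have hlt' : ¬ (y.1 : ℕ) < s + 1 := by rw [← h1]; exact hlt
        rw [dif_neg hlt, dif_neg hlt']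
        rcases fin2_cases x.2 with hx2 | hx2 <;> rcases fin2_cases y.2 with hy2 | hy2
        · exact absurd (hx2.trans hy2.symm) h2
        · rw [if_pos hx2, if_neg (by rw [hy2]; decide)]; exact huv
        · rw [if_neg (by rw [hx2]; decide), if_pos hy2]; exact huv.symm
        · exact absurd (hx2.trans hy2.symm) h2
    · intro p q hpq
      have hpq' : Mfun p = Mfun q := hpq
      simp only [hM] at hpq'
      by_cases h1 : (p.1 : ℕ) < s + 1 <;> by_cases h2 : (q.1 : ℕ) < s + 1
      · rw [dif_pos h1, dif_pos h2] at hpq'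
        have heq := hc (hembinj hpq')
        have e1 : (p.1 : ℕ) = (q.1 : ℕ) := by
          have := congrArg (fun w => ((w.1 : Fin (s + 1)) : ℕ)) heq
          simpa using this
        have e2 : p.2 = q.2 := by
          have := congrArg Prod.snd heq
          simpa using this
        rw [Prod.ext_iff]
        exact ⟨Fin.ext e1, e2⟩
      · rw [dif_pos h1, dif_neg h2] at hpq'
        rcases fin2_cases q.2 with hq2 | hq2
        · rw [if_pos hq2] at hpq'; exact absurd hpq' (havu _)
        · rw [if_neg (by rw [hq2]; decide)] at hpq'; exact absurd hpq' (havv _)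
      · rw [dif_neg h1, dif_pos h2] at hpq'
        rcases fin2_cases p.2 with hp2 | hp2
        · rw [if_pos hp2] at hpq'; exact absurd hpq'.symm (havu _)
        · rw [if_neg (by rw [hp2]; decide)] at hpq'; exact absurd hpq'.symm (havv _)
      · rw [dif_neg h1, dif_neg h2] at hpq'
        have hp1 := p.1.isLt
        have hq1 := q.1.isLt
        have e1 : p.1 = q.1 := Fin.ext (by omega)
        rw [Prod.ext_iff]
        refine ⟨e1, ?_⟩
        rcases fin2_cases p.2 with hp2 | hp2 <;> rcases fin2_cases q.2 with hq2 | hq2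
        · exact hp2.trans hq2.symm
        · rw [if_pos hp2, if_neg (by rw [hq2]; decide)] at hpq'; exact absurd hpq' huv.ne
        · rw [if_neg (by rw [hp2]; decide), if_pos hq2] at hpq'; exact absurd hpq'.symm huv.ne
        · exact hp2.trans hq2.symm
  · right
    refine ⟨⟨fun x => emb (c x), ?_⟩, fun x y h => hc (hembinj h)⟩
    intro x y hxy
    have h2 := c.map_adj hxy
    rw [SimpleGraph.sdiff_adj] at h2
    rw [SimpleGraph.sdiff_adj]
    exact ⟨Bmap_adj _ _ _ _ _ h2.1, fun hra => h2.2 ⟨h2.1, hra⟩⟩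

lemma arrows_ext {k : ℕ} (hk : 0 < k) (ℓ : Fin k → ℕ)
    (hmono : ∀ i j : Fin k, i ≤ j → ℓ j ≤ ℓ i) :
    ∀ s : ℕ, Arrows (Bgraph (k + s) (extL hk ℓ s)) (MatchingGraph (s + 1)) (Bgraph k ℓ) := by
  intro s
  induction s with
  | zero =>
    intro R hR
    by_cases hE : ∃ u v, R.Adj u v
    · obtain ⟨u, v, huv⟩ := hE
      left
      set Mfun : Fin (0 + 1) × Fin 2 → BV (k + 0) (extL hk ℓ 0) :=
        fun p => if p.2 = 0 then u else v with hM
      refine ⟨⟨Mfun, ?_⟩, ?_⟩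
      · intro x y hxy
        obtain ⟨h1, h2⟩ := hxy
        simp only [hM]
        rcases fin2_cases x.2 with hx2 | hx2 <;> rcases fin2_cases y.2 with hy2 | hy2
        · exact absurd (hx2.trans hy2.symm) h2
        · rw [if_pos hx2, if_neg (by rw [hy2]; decide)]; exact huv
        · rw [if_neg (by rw [hx2]; decide), if_pos hy2]; exact huv.symm
        · exact absurd (hx2.trans hy2.symm) h2
      · intro p q hpq
        have hpq' : Mfun p = Mfun q := hpq
        simp only [hM] at hpq'
        rw [Prod.ext_iff]
        have hp1 := p.1.isLt
        have hq1 := q.1.isLt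
        refine ⟨Fin.ext (by omega), ?_⟩
        rcases fin2_cases p.2 with hp2 | hp2 <;> rcases fin2_cases q.2 with hq2 | hq2
        · exact hp2.trans hq2.symm
        · rw [if_pos hp2, if_neg (by rw [hq2]; decide)] at hpq'; exact absurd hpq' huv.ne
        · rw [if_neg (by rw [hp2]; decide), if_pos hq2] at hpq'; exact absurd hpq'.symm huv.ne
        · exact hp2.trans hq2.symm
    · right
      push_neg at hE
      exact contains_sdiff (Bhom ℓ (extL hk ℓ 0) (incl0 0) (incl0 0) (incl0_cap hk ℓ 0))
        (Bmap_inj _ _ _ _ (incl0_cap hk ℓ 0) incl0_inj incl0_inj) (fun x y _ => hE _ _)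
  | succ s ih =>
    intro R hR
    by_cases hE : ∃ u v, R.Adj u v
    · obtain ⟨u, v, huv⟩ := hE
      rcases hR huv with ⟨i, j, hu, hv⟩ | ⟨i, j, hu, hv⟩ | ⟨i, a, hu, hv⟩ | ⟨i, a, hu, hv⟩
      · exact step_case hk ℓ hmono s ih R hR u v huv i j (Or.inl hu) (Or.inr (Or.inl hv))
      · exact step_case hk ℓ hmono s ih R hR u v huv i j (Or.inr (Or.inl hu)) (Or.inl hv)
      · exact step_case hk ℓ hmono s ih R hR u v huv i i (Or.inl hu) (Or.inr (Or.inr ⟨a, hv⟩))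
      · exact step_case hk ℓ hmono s ih R hR u v huv i i (Or.inr (Or.inr ⟨a, hu⟩)) (Or.inl hv)
    · right
      push_neg at hE
      exact contains_sdiff (Bhom ℓ (extL hk ℓ (s + 1)) (incl0 (s + 1)) (incl0 (s + 1)) (incl0_cap hk ℓ (s + 1)))
        (Bmap_inj _ _ _ _ (incl0_cap hk ℓ (s + 1)) incl0_inj incl0_inj) (fun x y _ => hE _ _)


def Gdel {V : Type*} (F : SimpleGraph V) (S : Finset V) : SimpleGraph V where
  Adj x y := F.Adj x y ∧ x ∉ S ∧ y ∉ S
  symm := ⟨fun x y h => ⟨h.1.symm, h.2.2, h.2.1⟩⟩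
  loopless := ⟨fun x h => F.irrefl h.1⟩

def RedS {V : Type*} (F : SimpleGraph V) (S : Finset V) : SimpleGraph V where
  Adj x y := F.Adj x y ∧ (x ∈ S ∨ y ∈ S)
  symm := ⟨fun x y h => ⟨h.1.symm, h.2.symm⟩⟩
  loopless := ⟨fun x h => F.irrefl h.1⟩

lemma RedS_le {V : Type*} (F : SimpleGraph V) (S : Finset V) : RedS F S ≤ F :=
  fun _ _ h => h.1

lemma sdiff_RedS {V : Type*} (F : SimpleGraph V) (S : Finset V) :
    F \ RedS F S = Gdel F S := by
  ext x y
  simp only [SimpleGraph.sdiff_adj, RedS, Gdel, not_and, not_or]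
  tauto

lemma Gdel_empty {V : Type*} (F : SimpleGraph V) : Gdel F ∅ = F := by
  ext x y
  simp [Gdel]

lemma no_matching {V : Type*} [DecidableEq V] (R : SimpleGraph V) (S : Finset V) (t : ℕ)
    (hcard : S.card < t) (hcover : ∀ x y, R.Adj x y → x ∈ S ∨ y ∈ S) :
    ¬ Contains R (MatchingGraph t) := by
  rintro ⟨f, hf⟩
  have h01 : (0 : Fin 2) ≠ 1 := by decide
  have hadj : ∀ i : Fin t, R.Adj (f (i, 0)) (f (i, 1)) := fun i =>
    f.map_adj (show (MatchingGraph t).Adj (i, 0) (i, 1) from ⟨rfl, h01⟩)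
  set g : Fin t → V := fun i => if f (i, 0) ∈ S then f (i, 0) else f (i, 1) with hg
  have hmem : ∀ i, g i ∈ S := by
    intro i
    simp only [hg]
    split_ifs with h
    · exact h
    · exact (hcover _ _ (hadj i)).resolve_left h
  have hginj : Function.Injective g := by
    intro i i' h
    simp only [hg] at h
    split_ifs at h with h1 h2 h2 <;>
      exact congrArg Prod.fst (hf h)
  have hcard2 : (Finset.univ : Finset (Fin t)).card ≤ S.card :=
    Finset.card_le_card_of_injOn g (fun i _ => hmem i) (hginj.injOn)
  simp at hcard2
  omega

lemma exists_high_deg {V : Type*} [Fintype V] {G : SimpleGraph V} {k : ℕ} (hk : 0 < k)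
    (ℓ : Fin k → ℕ) (hcont : Contains G (Bgraph k ℓ)) :
    ∃ v : V, k + ℓ ⟨0, hk⟩ ≤ {e ∈ G.edgeSet | v ∈ e}.ncard := by
  obtain ⟨f, hf⟩ := hcont
  set v := f (Sum.inl (Sum.inl ⟨0, hk⟩)) with hv
  refine ⟨v, ?_⟩
  classical
  set nbr : Fin k ⊕ Fin (ℓ ⟨0, hk⟩) → BV k ℓ := fun z =>
    Sum.elim (fun j => Sum.inl (Sum.inr j)) (fun a => Sum.inr ⟨⟨0, hk⟩, a⟩) z with hnbr
  have hadj : ∀ z, G.Adj v (f (nbr z)) := by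
    rintro (j | a)
    · exact f.map_adj (Or.inl ⟨⟨0, hk⟩, j, rfl, rfl⟩)
    · exact f.map_adj (Or.inr (Or.inr (Or.inl ⟨⟨0, hk⟩, a, rfl, rfl⟩)))
  set ψ : Fin k ⊕ Fin (ℓ ⟨0, hk⟩) → Sym2 V := fun z => s(v, f (nbr z)) with hψ
  have hnbr_inj : Function.Injective nbr := by
    rintro (j | a) (j' | a') h <;> simp only [hnbr, Sum.elim_inl, Sum.elim_inr] at h
    · injection h with h; injection h with h; rw [h]
    · simp at h
    · simp at h
    · injection h with h
      have h4 := eq_of_heq (Sigma.ext_iff.mp h).2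
      have h5 : a = a' := h4
      rw [h5]
  have hψ_inj : Function.Injective ψ := by
    intro z z' h
    simp only [hψ] at h
    rw [Sym2.eq_iff] at h
    rcases h with ⟨-, h2⟩ | ⟨h1, h2⟩
    · exact hnbr_inj (hf h2)
    · exact absurd (hf h2.symm) (by
        rcases z with j | a <;> simp [hnbr, hv] <;> intro hc <;> simp_all)
  have hsub : Set.range ψ ⊆ {e ∈ G.edgeSet | v ∈ e} := by
    rintro w ⟨z, rfl⟩
    exact ⟨hadj z, Sym2.mem_mk_left _ _⟩
  have h1 : (Set.range ψ).ncard = k + ℓ ⟨0, hk⟩ := by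
    rw [← Set.image_univ, Set.ncard_image_of_injective _ hψ_inj, Set.ncard_univ,
      Nat.card_eq_fintype_card]
    simp
  rw [← h1]
  exact Set.ncard_le_ncard hsub (Set.toFinite _)

lemma edge_le_of_contains {V W : Type*} [Fintype V] {G : SimpleGraph V} {B : SimpleGraph W}
    (hcont : Contains G B) : B.edgeSet.ncard ≤ G.edgeSet.ncard := by
  obtain ⟨f, hf⟩ := hcont
  have hsub : Sym2.map ⇑f '' B.edgeSet ⊆ G.edgeSet := by
    rintro w ⟨z, hz, rfl⟩
    induction z using Sym2.ind with
    | _ x y =>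
      rw [SimpleGraph.mem_edgeSet] at hz
      exact f.map_adj hz
  have himg : (Sym2.map ⇑f '' B.edgeSet).ncard = B.edgeSet.ncard :=
    Set.ncard_image_of_injective _ (Sym2.map.injective hf)
  rw [← himg]
  exact Set.ncard_le_ncard hsub (Set.toFinite _)

lemma Gdel_insert_edgeSet {V : Type*} [DecidableEq V] (F : SimpleGraph V) (S : Finset V)
    (v : V) :
    (Gdel F (insert v S)).edgeSet = (Gdel F S).edgeSet \ {e ∈ (Gdel F S).edgeSet | v ∈ e} := by
  ext z
  induction z using Sym2.ind with
  | _ x y =>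
    simp only [SimpleGraph.mem_edgeSet, Set.mem_diff, Set.mem_setOf_eq, Gdel,
      Finset.mem_insert, Sym2.mem_iff]
    constructor
    · rintro ⟨ha, hx, hy⟩
      push_neg at hx hy
      refine ⟨⟨ha, hx.2, hy.2⟩, ?_⟩
      rintro ⟨-, hc | hc⟩
      · exact hx.1 hc.symm
      · exact hy.1 hc.symm
    · rintro ⟨⟨ha, hx, hy⟩, hne⟩
      push_neg at hne
      refine ⟨ha, ?_, ?_⟩
      · rintro (hc | hc)
        · exact (hne ⟨ha, hx, hy⟩).1 hc.symm
        · exact hx hc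
      · rintro (hc | hc)
        · exact (hne ⟨ha, hx, hy⟩).2 hc.symm
        · exact hy hc

lemma lower_step {n : ℕ} {k t : ℕ} (hk : 0 < k) (ℓ : Fin k → ℕ)
    (F : SimpleGraph (Fin n)) (harr : Arrows F (MatchingGraph t) (Bgraph k ℓ))
    (S : Finset (Fin n)) (hcard : S.card < t) :
    Contains (Gdel F S) (Bgraph k ℓ) := by
  classical
  rcases harr (RedS F S) (RedS_le F S) with hred | hblue
  · exact absurd hred (no_matching _ S t hcard (fun x y h => h.2))
  · rwa [sdiff_RedS] at hblue

lemma lower_chain {n : ℕ} {k t : ℕ} (hk : 0 < k) (ℓ : Fin k → ℕ)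
    (F : SimpleGraph (Fin n)) (harr : Arrows F (MatchingGraph t) (Bgraph k ℓ)) (ht : 1 ≤ t) :
    ∀ s : ℕ, s ≤ t - 1 → ∃ S : Finset (Fin n), S.card ≤ s ∧
      (Gdel F S).edgeSet.ncard + s * (k + ℓ ⟨0, hk⟩) ≤ F.edgeSet.ncard := by
  classical
  intro s
  induction s with
  | zero =>
    intro _
    exact ⟨∅, by simp, by rw [Gdel_empty]; omega⟩
  | succ s ih =>
    intro hs
    obtain ⟨S, hScard, hSbound⟩ := ih (by omega)
    have hcont : Contains (Gdel F S) (Bgraph k ℓ) :=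
      lower_step hk ℓ F harr S (by omega)
    obtain ⟨v, hv⟩ := exists_high_deg hk ℓ hcont
    refine ⟨insert v S, le_trans (Finset.card_insert_le v S) (by omega), ?_⟩
    have hdel := Gdel_insert_edgeSet F S v
    have hsub : {e ∈ (Gdel F S).edgeSet | v ∈ e} ⊆ (Gdel F S).edgeSet :=
      fun e he => he.1
    have hdiff : ((Gdel F S).edgeSet \ {e ∈ (Gdel F S).edgeSet | v ∈ e}).ncard =
        (Gdel F S).edgeSet.ncard - {e ∈ (Gdel F S).edgeSet | v ∈ e}.ncard :=
      Set.ncard_diff hsub (Set.toFinite _)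
    have hle : {e ∈ (Gdel F S).edgeSet | v ∈ e}.ncard ≤ (Gdel F S).edgeSet.ncard :=
      Set.ncard_le_ncard hsub (Set.toFinite _)
    rw [hdel, hdiff]
    have hmul : (s + 1) * (k + ℓ ⟨0, hk⟩) = s * (k + ℓ ⟨0, hk⟩) + (k + ℓ ⟨0, hk⟩) := by ring
    omega

lemma lower_bound {n : ℕ} {k t : ℕ} (hk : 0 < k) (ℓ : Fin k → ℕ)
    (F : SimpleGraph (Fin n)) (harr : Arrows F (MatchingGraph t) (Bgraph k ℓ)) (ht : 1 ≤ t) :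
    (t - 1) * (k + ℓ ⟨0, hk⟩) + (k * k + ∑ i, ℓ i) ≤ F.edgeSet.ncard := by
  classical
  obtain ⟨S, hScard, hSbound⟩ := lower_chain hk ℓ F harr ht (t - 1) le_rfl
  have hcont : Contains (Gdel F S) (Bgraph k ℓ) :=
    lower_step hk ℓ F harr S (by omega)
  have hB : (Bgraph k ℓ).edgeSet.ncard ≤ (Gdel F S).edgeSet.ncard :=
    edge_le_of_contains hcont
  rw [ncard_edgeSet_B] at hB
  have h1 : (Gdel F S).edgeSet.ncard + (t - 1) * (k + ℓ ⟨0, hk⟩) ≤ F.edgeSet.ncard := by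
    have := hSbound
    omega
  omega


lemma extL_castAdd {k : ℕ} (hk : 0 < k) (ℓ : Fin k → ℕ) (s : ℕ) (x : Fin k) :
    extL hk ℓ s (Fin.castAdd s x) = ℓ x := by
  unfold extL
  rw [dif_pos (show ((Fin.castAdd s x : Fin (k + s)) : ℕ) < k by simp)]
  exact congrArg ℓ (Fin.ext (by simp))

lemma extL_natAdd {k : ℕ} (hk : 0 < k) (ℓ : Fin k → ℕ) (s : ℕ) (x : Fin s) :
    extL hk ℓ s (Fin.natAdd k x) = ℓ ⟨0, hk⟩ := by
  unfold extL
  rw [dif_neg (by simp only [Fin.coe_natAdd]; omega)]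

lemma sum_extL {k : ℕ} (hk : 0 < k) (ℓ : Fin k → ℕ) (s : ℕ) :
    ∑ i, extL hk ℓ s i = (∑ i, ℓ i) + s * ℓ ⟨0, hk⟩ := by
  rw [Fin.sum_univ_add]
  congr 1
  · exact Finset.sum_congr rfl fun x _ => extL_castAdd hk ℓ s x
  · rw [Finset.sum_congr rfl fun x _ => extL_natAdd hk ℓ s x]
    simp [Finset.sum_const, mul_comm]

lemma edgeSet_comap {n : ℕ} {V : Type*} (e : Fin n ≃ V) (G : SimpleGraph V) :
    (SimpleGraph.comap ⇑e G).edgeSet = Sym2.map ⇑e.symm '' G.edgeSet := by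
  ext z
  induction z using Sym2.ind with
  | _ x y =>
    simp only [SimpleGraph.mem_edgeSet, SimpleGraph.comap_adj, Set.mem_image]
    constructor
    · intro h
      exact ⟨s(e x, e y), h, by simp⟩
    · rintro ⟨w, hw, hmap⟩
      revert hw hmap
      induction w using Sym2.ind with
      | _ a b =>
        intro hw hmap
        rw [SimpleGraph.mem_edgeSet] at hw
        simp only [Sym2.map_pair_eq] at hmap
        rw [Sym2.eq_iff] at hmap
        rcases hmap with ⟨h1, h2⟩ | ⟨h1, h2⟩
        · rw [← h1, ← h2]
          simpa using hw
        · rw [← h1, ← h2]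
          simpa using hw.symm

lemma ncard_edgeSet_comap {n : ℕ} {V : Type*} (e : Fin n ≃ V) (G : SimpleGraph V) :
    (SimpleGraph.comap ⇑e G).edgeSet.ncard = G.edgeSet.ncard := by
  rw [edgeSet_comap, Set.ncard_image_of_injective _ (Sym2.map.injective e.symm.injective)]

lemma arrows_comap {n : ℕ} {V VG VH : Type*} (e : Fin n ≃ V) (G : SimpleGraph V)
    {A : SimpleGraph VG} {Bq : SimpleGraph VH} (h : Arrows G A Bq) :
    Arrows (SimpleGraph.comap ⇑e G) A Bq := by
  intro R hle
  set R' : SimpleGraph V := SimpleGraph.comap ⇑e.symm R with hR'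
  have hle' : R' ≤ G := by
    intro x y hxy
    have hxy' : R.Adj (e.symm x) (e.symm y) := hxy
    have h2 := hle hxy'
    have h3 : G.Adj (e (e.symm x)) (e (e.symm y)) := h2
    simpa using h3
  rcases h R' hle' with ⟨f, hf⟩ | ⟨f, hf⟩
  · left
    exact ⟨⟨fun x => e.symm (f x), fun hadj => f.map_adj hadj⟩,
      fun x y hxy => hf (e.symm.injective hxy)⟩
  · right
    refine ⟨⟨fun x => e.symm (f x), ?_⟩, fun x y hxy => hf (e.symm.injective hxy)⟩
    intro x y hxy
    have h2 := f.map_adj hxy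
    rw [SimpleGraph.sdiff_adj] at h2
    rw [SimpleGraph.sdiff_adj]
    constructor
    · show (SimpleGraph.comap ⇑e G).Adj (e.symm (f x)) (e.symm (f y))
      show G.Adj (e (e.symm (f x))) (e (e.symm (f y)))
      simpa using h2.1
    · exact h2.2

end Aux19

open Aux19

theorem stmt19 (k : ℕ) (hk : 2 ≤ k) (ℓ : Fin k → ℕ)
    (hmono : ∀ i j : Fin k, i ≤ j → ℓ j ≤ ℓ i) (t : ℕ) (ht : 1 ≤ t) :
    (t - 1) * (k + ℓ ⟨0, by omega⟩) + (2 * k + ∑ i, ℓ i) + k * (k - 2) ≤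
        sizeRamsey (MatchingGraph t) (Bgraph k ℓ) ∧
      sizeRamsey (MatchingGraph t) (Bgraph k ℓ) ≤
        (2 * k + ∑ i, ℓ i) + (t - 1) * ℓ ⟨0, by omega⟩ + (k + t - 1) ^ 2 - 2 * k := by
  have hk0 : 0 < k := by omega
  obtain ⟨s, rfl⟩ : ∃ s, t = s + 1 := ⟨t - 1, by omega⟩
  set Vb := BV (k + s) (extL hk0 ℓ s) with hVb
  set e : Fin (Fintype.card Vb) ≃ Vb := (Fintype.equivFin Vb).symm with he
  set Fw : SimpleGraph (Fin (Fintype.card Vb)) :=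
    SimpleGraph.comap ⇑e (Bgraph (k + s) (extL hk0 ℓ s)) with hFw
  have harrw : Arrows Fw (MatchingGraph (s + 1)) (Bgraph k ℓ) :=
    arrows_comap e _ (arrows_ext hk0 ℓ hmono s)
  have hcount : Fw.edgeSet.ncard = (k + s) * (k + s) + ((∑ i, ℓ i) + s * ℓ ⟨0, hk0⟩) := by
    rw [hFw, ncard_edgeSet_comap, ncard_edgeSet_B, sum_extL]
  have hmem : Fw.edgeSet.ncard ∈ {m : ℕ | ∃ (nn : ℕ) (F : SimpleGraph (Fin nn)),
      Arrows F (MatchingGraph (s + 1)) (Bgraph k ℓ) ∧ F.edgeSet.ncard = m} :=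
    ⟨Fintype.card Vb, Fw, harrw, rfl⟩
  constructor
  · apply le_csInf ⟨Fw.edgeSet.ncard, hmem⟩
    rintro m ⟨nn, F, harr, rfl⟩
    have hlb := lower_bound hk0 ℓ F harr (by omega)
    have hkk : k * (k - 2) + 2 * k = k * k := by
      obtain ⟨k', rfl⟩ : ∃ k', k = k' + 2 := ⟨k - 2, by omega⟩
      simp only [Nat.add_sub_cancel]
      ring
    show (s + 1 - 1) * (k + ℓ ⟨0, hk0⟩) + (2 * k + ∑ i, ℓ i) + k * (k - 2) ≤
      F.edgeSet.ncard
    omega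
  · have hupper : sizeRamsey (MatchingGraph (s + 1)) (Bgraph k ℓ) ≤ Fw.edgeSet.ncard :=
      Nat.sInf_le hmem
    show sizeRamsey (MatchingGraph (s + 1)) (Bgraph k ℓ) ≤
      (2 * k + ∑ i, ℓ i) + (s + 1 - 1) * ℓ ⟨0, hk0⟩ + (k + (s + 1) - 1) ^ 2 - 2 * k
    have h1 : k + (s + 1) - 1 = k + s := by omega
    rw [h1]
    have hsq : (k + s) ^ 2 = (k + s) * (k + s) := by ring
    rw [hsq]
    have hs1 : s + 1 - 1 = s := by omega
    rw [hs1]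
    have h2k : 2 * k ≤ (k + s) * (k + s) := by
      calc 2 * k ≤ k * k := by nlinarith
      _ ≤ (k + s) * (k + s) := by nlinarith
    omega
end
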